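/- arXiv:1001.1114 — 3 statements merged into one kernel-verified Lean document; each statement's English description precedes it below -/
import Mathlib

section
/- For every integer i with 2 ≤ i ≤ g − 2, the element x = a_1∧b_1∧a_3∧a_4∧⋯∧a_{i+2} ∈ ⋀^{i+2} H satisfies C_i(C_{i+2}(x)) = 0 but C_{i+2}(x) ≠ 0; that is, x lies in the kernel of the composition C_i ∘ C_{i+2} but does not lie in the kernel of C_{i+2}. -/
/-- The `2g`-dimensional rational vector space `H = ℚ^{2g}`, with basis indexed by
`Fin g ⊕ Fin g`: `Sum.inl j` corresponds to `a_{j+1}` and `Sum.inr j` to `b_{j+1}`. -/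
abbrev HH (g : ℕ) : Type := (Fin g ⊕ Fin g) → ℚ

/-- The basis vector `a_{j+1}` of `H`. -/
def aa (g : ℕ) (j : Fin g) : HH g := Pi.single (Sum.inl j) 1

/-- The basis vector `b_{j+1}` of `H`. -/
def bb (g : ℕ) (j : Fin g) : HH g := Pi.single (Sum.inr j) 1

/-- The standard symplectic form `ω` on `H`. -/
def omg (g : ℕ) (x y : HH g) : ℚ :=
  ∑ j : Fin g, (x (Sum.inl j) * y (Sum.inr j) - x (Sum.inr j) * y (Sum.inl j))

/-- The wedge `x_1 ∧ ⋯ ∧ x_k`, as an element of the `k`-th exterior power `⋀^k H`. -/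
noncomputable def wedge (g k : ℕ) (v : Fin k → HH g) : ⋀[ℚ]^k (HH g) :=
  ⟨ExteriorAlgebra.ιMulti ℚ k v, ExteriorAlgebra.ιMulti_range ℚ k (Set.mem_range_self v)⟩

/-- Given a `k`-tuple `v` and indices `j < l`, the `(k-2)`-tuple obtained from `v` by
omitting the entries at positions `j` and `l`. -/
def remove2 {α : Type*} {k : ℕ} (v : Fin k → α) (j l : Fin k) : Fin (k - 2) → α :=
  fun t => v ⟨if (t : ℕ) < (j : ℕ) then (t : ℕ)
      else if (t : ℕ) + 1 < (l : ℕ) then (t : ℕ) + 1 else (t : ℕ) + 2, by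
    have ht := t.isLt
    have hl := l.isLt
    split_ifs <;> omega⟩

/-- The value `F(x_1, …, x_k) = Σ_{j<l} (-1)^{j+l+1} ω(x_j, x_l) ·
x_1 ∧ ⋯ ∧ x̂_j ∧ ⋯ ∧ x̂_l ∧ ⋯ ∧ x_k ∈ ⋀^{k-2} H`. (Indices are 0-based here, which
yields the same signs as the 1-based formula.) -/
noncomputable def contractExpr (g k : ℕ) (v : Fin k → HH g) : ⋀[ℚ]^(k - 2) (HH g) :=
  ∑ p ∈ Finset.univ.filter (fun p : Fin k × Fin k => (p.1 : ℕ) < (p.2 : ℕ)),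
    ((-1 : ℚ) ^ ((p.1 : ℕ) + (p.2 : ℕ) + 1) * omg g (v p.1) (v p.2)) •
      wedge g (k - 2) (remove2 v p.1 p.2)

/-- `IsContraction g k C` says that `C : ⋀^k H → ⋀^{k-2} H` is the contraction `C_k`,
i.e. the (unique) linear map satisfying the defining formula on wedges. -/
def IsContraction (g k : ℕ) (C : ⋀[ℚ]^k (HH g) →ₗ[ℚ] ⋀[ℚ]^(k - 2) (HH g)) : Prop :=
  ∀ v : Fin k → HH g, C (wedge g k v) = contractExpr g k v

lemma mapAlg_mem (g k : ℕ) (S : HH g →ₗ[ℚ] HH g) {x : ExteriorAlgebra ℚ (HH g)}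
    (hx : x ∈ ⋀[ℚ]^k (HH g)) : ExteriorAlgebra.map S x ∈ ⋀[ℚ]^k (HH g) := by
  rw [← ExteriorAlgebra.ιMulti_span_fixedDegree] at hx ⊢
  have h : Submodule.map (ExteriorAlgebra.map S).toLinearMap
      (Submodule.span ℚ (Set.range (ExteriorAlgebra.ιMulti ℚ k))) ≤
      Submodule.span ℚ (Set.range (ExteriorAlgebra.ιMulti ℚ k (M := HH g))) := by
    rw [Submodule.map_span, Submodule.span_le]
    rintro _ ⟨_, ⟨v, rfl⟩, rfl⟩
    exact Submodule.subset_span ⟨S ∘ v, (ExteriorAlgebra.map_apply_ιMulti S v).symm⟩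
  exact h (Submodule.mem_map_of_mem hx)

/-- The linear map `⋀^k S : ⋀^k H → ⋀^k H` induced by a linear map `S : H → H`. -/
noncomputable def powMap (g k : ℕ) (S : HH g →ₗ[ℚ] HH g) :
    ⋀[ℚ]^k (HH g) →ₗ[ℚ] ⋀[ℚ]^k (HH g) :=
  (ExteriorAlgebra.map S).toLinearMap.restrict fun _ hx => mapAlg_mem g k S hx

/-! Of the pairs of factors of `x = a_1 ∧ b_1 ∧ a_3 ∧ ⋯ ∧ a_{i+2}`, only `(a_1, b_1)` pairs
nontrivially under `ω`, so `C_{i+2} x = a_3 ∧ ⋯ ∧ a_{i+2}`. This is a wedge of distinct basis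
vectors, hence nonzero, and `C_i` kills it because `ω` vanishes on the span of the `a_j`. -/

lemma omg_aa_aa (g : ℕ) (j k : Fin g) : omg g (aa g j) (aa g k) = 0 := by
  simp [omg, aa, Pi.single_apply]

lemma omg_aa_bb (g : ℕ) (j k : Fin g) : omg g (aa g j) (bb g k) = if j = k then 1 else 0 := by
  simp [omg, aa, bb, Pi.single_apply, eq_comm]

lemma omg_bb_aa (g : ℕ) (j k : Fin g) : omg g (bb g j) (aa g k) = if j = k then -1 else 0 := by
  split_ifs with hjk <;> simp [omg, aa, bb, Pi.single_apply, hjk, eq_comm]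

lemma wedge_eq_ιMulti (g k : ℕ) (v : Fin k → HH g) :
    wedge g k v = exteriorPower.ιMulti ℚ k v :=
  rfl

lemma exteriorPower.ιMulti_ne_zero_of_linearIndependent {K E : Type*} [Field K] [AddCommGroup E]
    [Module K E] {n : ℕ} {v : Fin n → E} (hv : LinearIndependent K v) :
    exteriorPower.ιMulti K n v ≠ 0 := by
  have hne := (exteriorPower.ιMulti_family_linearIndependent_field (n := n) hv).ne_zero
    (Set.powersetCard.ofFinEmbEquiv (OrderIso.refl (Fin n)).toOrderEmbedding)
  simpa [exteriorPower.ιMulti_family] using hne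

lemma wedge_aa_ne_zero (g k : ℕ) {f : Fin k → Fin g} (hf : Function.Injective f) :
    wedge g k (fun t => aa g (f t)) ≠ 0 := by
  rw [wedge_eq_ιMulti]
  exact exteriorPower.ιMulti_ne_zero_of_linearIndependent
    ((Pi.linearIndependent_single_one _ ℚ).comp (Sum.inl ∘ f) (Sum.inl_injective.comp hf))

lemma contractExpr_eq_zero {g k : ℕ} {v : Fin k → HH g} (hv : ∀ j l, omg g (v j) (v l) = 0) :
    contractExpr g k v = 0 :=
  Finset.sum_eq_zero fun p _ => by rw [hv, mul_zero, zero_smul]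

lemma contractExpr_eq_single {g k : ℕ} {v : Fin k → HH g} {j₀ l₀ : Fin k} (hlt : j₀ < l₀)
    (hv : ∀ j l, j < l → (j, l) ≠ (j₀, l₀) → omg g (v j) (v l) = 0) :
    contractExpr g k v = ((-1 : ℚ) ^ ((j₀ : ℕ) + (l₀ : ℕ) + 1) * omg g (v j₀) (v l₀)) •
      wedge g (k - 2) (remove2 v j₀ l₀) := by
  refine Finset.sum_eq_single_of_mem (j₀, l₀) (by simpa using hlt) fun p hp hne => ?_
  rw [hv p.1 p.2 (by simpa using hp) hne, mul_zero, zero_smul]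

/-- The tuple `(a_1, b_1, a_3, …, a_{i+2})`, whose wedge is the element `x`. -/
def xTuple (g i : ℕ) (h : i + 2 ≤ g) : Fin (i + 2) → HH g := fun j =>
  if (j : ℕ) = 0 then aa g ⟨0, by omega⟩
  else if (j : ℕ) = 1 then bb g ⟨0, by omega⟩
  else aa g ⟨(j : ℕ), by omega⟩

section xTuple

variable {g i : ℕ} (h : i + 2 ≤ g)

lemma omg_xTuple_zero_one :
    omg g (xTuple g i h ⟨0, by omega⟩) (xTuple g i h ⟨1, by omega⟩) = 1 := by
  simp [xTuple, omg_aa_bb]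

lemma omg_xTuple_of_ne {j l : Fin (i + 2)} (hjl : j < l)
    (hne : (j, l) ≠ (⟨0, by omega⟩, ⟨1, by omega⟩)) :
    omg g (xTuple g i h j) (xTuple g i h l) = 0 := by
  rw [Fin.lt_def] at hjl
  have hl : (l : ℕ) ≠ 0 := by omega
  by_cases hj1 : (j : ℕ) = 1
  · have hl1 : (l : ℕ) ≠ 1 := by omega
    simp only [xTuple, hj1, hl, hl1, if_true, if_false, one_ne_zero, omg_bb_aa]
    rw [if_neg (by simp [Fin.ext_iff]; omega)]
  · have hl1 : (l : ℕ) ≠ 1 := by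
      rintro hl1
      exact hne (Prod.ext (Fin.ext (show (j : ℕ) = 0 by omega)) (Fin.ext hl1))
    simp only [xTuple, hj1, hl, hl1, if_false]
    split_ifs <;> exact omg_aa_aa _ _ _

lemma remove2_xTuple_zero_one :
    remove2 (xTuple g i h) ⟨0, by omega⟩ ⟨1, by omega⟩ =
      fun t : Fin (i + 2 - 2) => aa g ⟨(t : ℕ) + 2, by have := t.isLt; omega⟩ := by
  funext t
  simp [remove2, xTuple]

lemma contractExpr_xTuple :
    contractExpr g (i + 2) (xTuple g i h) =
      wedge g (i + 2 - 2) fun t : Fin (i + 2 - 2) =>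
        aa g ⟨(t : ℕ) + 2, by have := t.isLt; omega⟩ := by
  rw [contractExpr_eq_single (j₀ := ⟨0, by omega⟩) (l₀ := ⟨1, by omega⟩)
      (Fin.mk_lt_mk.mpr Nat.zero_lt_one) (fun _ _ => omg_xTuple_of_ne h),
    omg_xTuple_zero_one, remove2_xTuple_zero_one]
  simp

end xTuple

/-- For `2 ≤ i ≤ g - 2`, the element `x = a_1∧b_1∧a_3∧⋯∧a_{i+2} ∈ ⋀^{i+2} H`
satisfies `C_i (C_{i+2} x) = 0` but `C_{i+2} x ≠ 0`: it lies in the kernel of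
`C_i ∘ C_{i+2}` but not in the kernel of `C_{i+2}`. -/
theorem statement4 (g : ℕ) (hg : 2 ≤ g) (i : ℕ) (hi2 : i ≤ g - 2)
    (C2 : ⋀[ℚ]^(i + 2) (HH g) →ₗ[ℚ] ⋀[ℚ]^(i + 2 - 2) (HH g))
    (hC2 : IsContraction g (i + 2) C2)
    (C1 : ⋀[ℚ]^i (HH g) →ₗ[ℚ] ⋀[ℚ]^(i - 2) (HH g)) (hC1 : IsContraction g i C1) :
    C1 (C2 (wedge g (i + 2) fun j =>
        if (j : ℕ) = 0 then aa g ⟨0, by omega⟩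
        else if (j : ℕ) = 1 then bb g ⟨0, by omega⟩
        else aa g ⟨(j : ℕ), by have := j.isLt; omega⟩)) = 0 ∧
    C2 (wedge g (i + 2) fun j =>
        if (j : ℕ) = 0 then aa g ⟨0, by omega⟩
        else if (j : ℕ) = 1 then bb g ⟨0, by omega⟩
        else aa g ⟨(j : ℕ), by have := j.isLt; omega⟩) ≠ 0 := by
  have h : i + 2 ≤ g := by omega
  have hC2x : C2 (wedge g (i + 2) (xTuple g i h)) =
      wedge g (i + 2 - 2) fun t : Fin (i + 2 - 2) =>
        aa g ⟨(t : ℕ) + 2, by have := t.isLt; omega⟩ :=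
    (hC2 _).trans (contractExpr_xTuple h)
  refine ⟨?_, ?_⟩
  · change C1 (C2 (wedge g (i + 2) (xTuple g i h))) = 0
    rw [hC2x]
    exact (hC1 _).trans (contractExpr_eq_zero fun _ _ => omg_aa_aa _ _ _)
  · change C2 (wedge g (i + 2) (xTuple g i h)) ≠ 0
    rw [hC2x]
    exact wedge_aa_ne_zero g i fun s t hst => Fin.ext (by simpa using congrArg Fin.val hst)
end

section
/- Let T and T' be disjoint nonempty subsets of {1, …, g} and let s_1, …, s_k (k ≥ 0) be distinct elements of {1, …, g} \ (T ∪ T'). Then the element (Σ_{ℓ∈T} a_ℓ∧b_ℓ)∧(Σ_{ℓ'∈T'} a_{ℓ'}∧b_{ℓ'})∧a_{s_1}∧⋯∧a_{s_k} is nonzero in ⋀^{k+4} H. -/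
/-!
Pick `x ∈ T` and `y ∈ T'`. Expanding, the element is the sum over `(ℓ, ℓ') ∈ T × T'` of the
wedges `a_ℓ ∧ b_ℓ ∧ a_ℓ' ∧ b_ℓ' ∧ a_{s_1} ∧ ⋯ ∧ a_{s_k}` of basis vectors. The minor of the
coordinates `a_x, b_x, a_y, b_y, a_{s_1}, …, a_{s_k}` is a functional on `⋀ H` which is `1` on
the `(x, y)` term and `0` on every other term: such a term contains some `b_ℓ` with
`ℓ ∉ {x, y}`, because `T` and `T'` are disjoint.
-/

open ExteriorAlgebra

theorem Fin.comp_append {α β : Type*} {m n : ℕ} (f : α → β) (u : Fin m → α) (v : Fin n → α) :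
    f ∘ Fin.append u v = Fin.append (f ∘ u) (f ∘ v) := by
  funext i
  refine Fin.addCases (fun i => ?_) (fun i => ?_) i <;> simp

theorem Fin.range_append {α : Type*} {m n : ℕ} (u : Fin m → α) (v : Fin n → α) :
    Set.range (Fin.append u v) = Set.range u ∪ Set.range v := by
  ext a
  constructor
  · rintro ⟨i, rfl⟩
    refine Fin.addCases (fun i => ?_) (fun i => ?_) i <;> simp
  · rintro (⟨i, rfl⟩ | ⟨i, rfl⟩)
    exacts [⟨Fin.castAdd n i, by simp⟩, ⟨Fin.natAdd m i, by simp⟩]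

section MinorFunctional

variable {R I : Type*} [CommRing R]

/-- The `n × n` minor on the coordinates `c`, extended by zero to the other degrees. -/
noncomputable def minorFunctional (n : ℕ) (c : Fin n → I) : ExteriorAlgebra R (I → R) →ₗ[R] R :=
  liftAlternating (Pi.single (M := fun i => (I → R) [⋀^Fin i]→ₗ[R] R) n
    (Matrix.detRowAlternating.compLinearMap (LinearMap.funLeft R R c)))

theorem minorFunctional_ιMulti {n : ℕ} (c : Fin n → I) (v : Fin n → I → R) :
    minorFunctional n c (ιMulti R n v) = (Matrix.of fun i j => v i (c j)).det := by
  rw [minorFunctional, liftAlternating_apply_ιMulti, Pi.single_eq_same]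
  rfl

theorem minorFunctional_ιMulti_single_self [DecidableEq I] {n : ℕ} {c : Fin n → I}
    (hc : Function.Injective c) :
    minorFunctional n c (ιMulti R n fun i => Pi.single (c i) 1) = 1 := by
  rw [minorFunctional_ιMulti, ← Matrix.det_one (n := Fin n) (R := R)]
  congr
  ext i j
  simp [Pi.single_apply, hc.eq_iff, Matrix.one_apply, eq_comm]

theorem minorFunctional_ιMulti_single_of_notMem_range [DecidableEq I] {n : ℕ} (c e : Fin n → I)
    {i : Fin n} (hi : e i ∉ Set.range c) :
    minorFunctional n c (ιMulti R n fun i => Pi.single (e i) 1) = 0 := by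
  rw [minorFunctional_ιMulti]
  refine Matrix.det_eq_zero_of_row_eq_zero i fun j => ?_
  simp only [Matrix.of_apply, Pi.single_apply]
  exact if_neg fun h => hi ⟨j, h⟩

end MinorFunctional

section PairIndex

variable {J : Type*} {k : ℕ}

/-- The basis indices of `a_ℓ ∧ b_ℓ ∧ a_ℓ' ∧ b_ℓ' ∧ a_{s 0} ∧ ⋯ ∧ a_{s (k-1)}`. -/
def pairIndex (ℓ ℓ' : J) (s : Fin k → J) : Fin (2 + 2 + k) → J ⊕ J :=
  Fin.append (Fin.append ![.inl ℓ, .inr ℓ] ![.inl ℓ', .inr ℓ']) (Sum.inl ∘ s)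

theorem pairIndex_apply_one (ℓ ℓ' : J) (s : Fin k → J) :
    pairIndex ℓ ℓ' s (Fin.castAdd k (Fin.castAdd 2 1)) = .inr ℓ := by
  rw [pairIndex, Fin.append_left, Fin.append_left]
  rfl

theorem pairIndex_apply_three (ℓ ℓ' : J) (s : Fin k → J) :
    pairIndex ℓ ℓ' s (Fin.castAdd k (Fin.natAdd 2 1)) = .inr ℓ' := by
  rw [pairIndex, Fin.append_left, Fin.append_right]
  rfl

theorem inr_mem_range_pairIndex {ℓ ℓ' m : J} {s : Fin k → J} :
    Sum.inr m ∈ Set.range (pairIndex ℓ ℓ' s) ↔ m = ℓ ∨ m = ℓ' := by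
  rw [pairIndex, Fin.range_append, Fin.range_append]
  simp [Matrix.range_cons, eq_comm, or_comm]

theorem pairIndex_injective {ℓ ℓ' : J} {s : Fin k → J} (hℓ : ℓ ≠ ℓ') (hs : Function.Injective s)
    (hsℓ : ∀ t, s t ≠ ℓ) (hsℓ' : ∀ t, s t ≠ ℓ') : Function.Injective (pairIndex ℓ ℓ' s) := by
  refine Fin.append_injective_iff.2 ⟨Fin.append_injective_iff.2 ⟨?_, ?_, ?_⟩,
    Sum.inl_injective.comp hs, ?_⟩
  · simp
  · simp
  · intro i j; fin_cases i <;> fin_cases j <;> simp [hℓ]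
  · intro i j h
    have hmem : Sum.inl (s j) ∈ Set.range (Fin.append ![.inl ℓ, .inr ℓ] ![.inl ℓ', .inr ℓ']) :=
      ⟨i, h⟩
    rw [Fin.range_append] at hmem
    simp [Matrix.range_cons, hsℓ, hsℓ'] at hmem

end PairIndex

theorem minorFunctional_pairIndex {R J : Type*} [CommRing R] [DecidableEq J] {k : ℕ}
    {x y ℓ ℓ' : J} {s : Fin k → J} (hxy : x ≠ y) (hs : Function.Injective s)
    (hsx : ∀ t, s t ≠ x) (hsy : ∀ t, s t ≠ y) (hℓy : ℓ ≠ y) (hℓ'x : ℓ' ≠ x) :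
    minorFunctional _ (pairIndex x y s) (ιMulti R _ fun i => Pi.single (pairIndex ℓ ℓ' s i) 1) =
      if (ℓ, ℓ') = (x, y) then 1 else 0 := by
  split_ifs with h
  · obtain ⟨rfl, rfl⟩ := Prod.mk.inj h
    exact minorFunctional_ιMulti_single_self (pairIndex_injective hxy hs hsx hsy)
  · by_cases hℓx : ℓ = x
    · have hℓ'y : ℓ' ≠ y := fun hℓ'y => h (by rw [hℓx, hℓ'y])
      refine minorFunctional_ιMulti_single_of_notMem_range _ _
        (i := Fin.castAdd k (Fin.natAdd 2 1)) ?_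
      rw [pairIndex_apply_three, inr_mem_range_pairIndex]
      tauto
    · refine minorFunctional_ιMulti_single_of_notMem_range _ _
        (i := Fin.castAdd k (Fin.castAdd 2 1)) ?_
      rw [pairIndex_apply_one, inr_mem_range_pairIndex]
      tauto

theorem sum_ιMulti_pair_mul_eq_sum_pairIndex (g : ℕ) (T T' : Finset (Fin g)) {k : ℕ}
    (s : Fin k → Fin g) :
    (∑ ℓ ∈ T, ιMulti ℚ 2 ![aa g ℓ, bb g ℓ]) * (∑ ℓ ∈ T', ιMulti ℚ 2 ![aa g ℓ, bb g ℓ]) *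
        ιMulti ℚ k (fun t => aa g (s t)) =
      ∑ p ∈ T ×ˢ T', ιMulti ℚ (2 + 2 + k) fun i => Pi.single (pairIndex p.1 p.2 s i) 1 := by
  have hpair : ∀ ℓ, ![aa g ℓ, bb g ℓ] = (Pi.single · (1 : ℚ)) ∘ ![.inl ℓ, .inr ℓ] := by
    intro ℓ
    ext i : 1
    fin_cases i <;> rfl
  rw [Finset.sum_mul_sum, Finset.sum_product, Finset.sum_mul]
  refine Finset.sum_congr rfl fun ℓ _ => ?_
  rw [Finset.sum_mul]
  refine Finset.sum_congr rfl fun ℓ' _ => ?_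
  change _ = ιMulti ℚ _ ((Pi.single · (1 : ℚ)) ∘ pairIndex ℓ ℓ' s)
  rw [ιMulti_mul_ιMulti, ιMulti_mul_ιMulti, hpair, hpair, pairIndex, Fin.comp_append,
    Fin.comp_append]
  rfl

theorem statement13_general (g : ℕ) (T T' : Finset (Fin g))
    (hT : T.Nonempty) (hT' : T'.Nonempty) (hTT' : Disjoint T T')
    (k : ℕ) (s : Fin k → Fin g) (hs : Function.Injective s)
    (hsT : ∀ t, s t ∉ T) (hsT' : ∀ t, s t ∉ T') :
    (∑ ℓ ∈ T, ExteriorAlgebra.ιMulti ℚ 2 ![aa g ℓ, bb g ℓ]) *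
      (∑ ℓ ∈ T', ExteriorAlgebra.ιMulti ℚ 2 ![aa g ℓ, bb g ℓ]) *
      ExteriorAlgebra.ιMulti ℚ k (fun t => aa g (s t)) ≠ 0 := by
  obtain ⟨x, hx⟩ := hT
  obtain ⟨y, hy⟩ := hT'
  have hne := Finset.disjoint_iff_ne.1 hTT'
  have hcoeff : ∀ p ∈ T ×ˢ T', minorFunctional _ (pairIndex x y s)
      (ιMulti ℚ _ fun i => Pi.single (pairIndex p.1 p.2 s i) 1) = if p = (x, y) then 1 else 0 :=
    fun p hp => minorFunctional_pairIndex (hne x hx y hy) hs (fun t h => hsT t (h ▸ hx))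
      (fun t h => hsT' t (h ▸ hy)) (hne _ (Finset.mem_product.1 hp).1 y hy)
      (hne x hx _ (Finset.mem_product.1 hp).2).symm
  rw [sum_ιMulti_pair_mul_eq_sum_pairIndex]
  refine ne_of_apply_ne (minorFunctional _ (pairIndex x y s)) ?_
  rw [map_sum, map_zero, Finset.sum_congr rfl hcoeff, Finset.sum_ite_eq',
    if_pos (Finset.mk_mem_product hx hy)]
  exact one_ne_zero

/-- Let `T` and `T'` be disjoint nonempty subsets of `{1, …, g}` and let
`s_1, …, s_k` (`k ≥ 0`) be distinct elements of `{1, …, g} \ (T ∪ T')`.  Then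
`(Σ_{ℓ∈T} a_ℓ∧b_ℓ)∧(Σ_{ℓ'∈T'} a_{ℓ'}∧b_{ℓ'})∧a_{s_1}∧⋯∧a_{s_k}` is nonzero in `⋀^{k+4} H`
(the element is computed in the exterior algebra of `H`, where `⋀^{k+4} H` lives). -/
theorem statement13 (g : ℕ) (hg : 2 ≤ g) (T T' : Finset (Fin g))
    (hT : T.Nonempty) (hT' : T'.Nonempty) (hTT' : Disjoint T T')
    (k : ℕ) (s : Fin k → Fin g) (hs : Function.Injective s)
    (hsT : ∀ t, s t ∉ T) (hsT' : ∀ t, s t ∉ T') :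
    (∑ ℓ ∈ T, ExteriorAlgebra.ιMulti ℚ 2 ![aa g ℓ, bb g ℓ]) *
      (∑ ℓ ∈ T', ExteriorAlgebra.ιMulti ℚ 2 ![aa g ℓ, bb g ℓ]) *
      ExteriorAlgebra.ιMulti ℚ k (fun t => aa g (s t)) ≠ 0 :=
  statement13_general g T T' hT hT' hTT' k s hs hsT hsT'
end

section
/- Let k ≥ 1 and let 1 < ℓ_1 < ℓ_2 < ⋯ < ℓ_k < g be indices in {1, …, g}, and set c = a_{ℓ_1}∧⋯∧a_{ℓ_k} ∈ ⋀^k H. For each ordered pair (ℓ, ℓ') of distinct elements of {1, …, g} \ {ℓ_1, …, ℓ_k}, define ε_{ℓ,ℓ'} = Π_{i=1}^k ε_i, where ε_i = 1 if ℓ < ℓ_i < ℓ', ε_i = −1 if ℓ' < ℓ_i < ℓ, and ε_i = 0 otherwise. Set ω_0 = Σ_{ℓ < ℓ_1} a_ℓ∧b_ℓ and ω^0 = Σ_{ℓ' > ℓ_k} a_{ℓ'}∧b_{ℓ'}. Then Σ_{(ℓ,ℓ')} ε_{ℓ,ℓ'} · a_ℓ∧b_ℓ∧a_{ℓ'}∧b_{ℓ'}∧c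 = (1 + (−1)^k) · ω_0∧ω^0∧c in ⋀^{k+4} H, where the sum is over all ordered pairs (ℓ, ℓ') of distinct elements of {1, …, g} \ {ℓ_1, …, ℓ_k}. In particular this sum vanishes when k is odd, and equals 2·ω_0∧ω^0∧c when k is even. -/
/-!
The sign `ε_{ℓ,ℓ'}` vanishes unless every `ℓ_i` lies strictly between `ℓ` and `ℓ'`. It is `1`
when `ℓ < ℓ_1` and `ℓ_k < ℓ'`, which are exactly the pairs occurring in `ω_0 ∧ ω^0`, and
`(-1)^k` on the reversed pairs. Two-vectors commute in the exterior algebra, so a reversed pair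
contributes the same four-vector as the original one.
-/

open ExteriorAlgebra Finset

namespace ExteriorAlgebra

variable {R M : Type*} [CommRing R] [AddCommGroup M] [Module R M]

theorem ι_mul_ι_eq_neg (x y : M) : ι R x * ι R y = -(ι R y * ι R x) :=
  eq_neg_of_add_eq_zero_left (ι_add_mul_swap x y)

theorem commute_ι_mul_ι_ι (x y z : M) : Commute (ι R x * ι R y) (ι R z) := by
  rw [Commute, SemiconjBy, mul_assoc, ι_mul_ι_eq_neg y z, mul_neg, ← mul_assoc,
    ι_mul_ι_eq_neg x z, neg_mul, neg_neg, mul_assoc]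

theorem ιMulti_two (x y : M) : ιMulti R 2 ![x, y] = ι R x * ι R y := by
  simp [ιMulti_apply]

theorem commute_ιMulti_two (x y z w : M) :
    Commute (ιMulti R 2 ![x, y]) (ιMulti R 2 ![z, w]) := by
  rw [ιMulti_two, ιMulti_two]
  exact ((commute_ι_mul_ι_ι x y z).mul_right (commute_ι_mul_ι_ι x y w))

theorem ιMulti_two_mul_ιMulti_two (x y z w : M) :
    ιMulti R 2 ![x, y] * ιMulti R 2 ![z, w] = ιMulti R 4 ![x, y, z, w] := by
  rw [ιMulti_mul_ιMulti]
  congr 1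
  ext i
  fin_cases i <;> rfl

end ExteriorAlgebra

section CrossingSign

variable {ι α : Type*} [LinearOrder α] {L : ι → α} {i j : α}

theorem ne_and_forall_ne_of_forall_between [Nonempty ι] (h : ∀ t, i < L t ∧ L t < j) :
    i ≠ j ∧ (∀ t, i ≠ L t) ∧ ∀ t, j ≠ L t := by
  obtain ⟨t₀⟩ := ‹Nonempty ι›
  exact ⟨((h t₀).1.trans (h t₀).2).ne, fun t => (h t).1.ne, fun t => (h t).2.ne'⟩

variable (R : Type*) [CommRing R] [Fintype ι]

def crossingSign (L : ι → α) (i j : α) : R :=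
  ∏ t, if i < L t ∧ L t < j then 1 else if j < L t ∧ L t < i then -1 else 0

variable {R}

theorem crossingSign_eq_one (h : ∀ t, i < L t ∧ L t < j) : crossingSign R L i j = 1 :=
  prod_eq_one fun t _ => if_pos (h t)

theorem crossingSign_eq_neg_one_pow (h : ∀ t, j < L t ∧ L t < i) :
    crossingSign R L i j = (-1) ^ Fintype.card ι := by
  rw [crossingSign, ← card_univ, ← prod_const]
  refine prod_congr rfl fun t _ => ?_
  rw [if_neg fun h' => lt_asymm (h'.1.trans h'.2) ((h t).1.trans (h t).2), if_pos (h t)]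

theorem forall_between_of_crossingSign_ne_zero [Nonempty ι] (h : crossingSign R L i j ≠ 0) :
    (∀ t, i < L t ∧ L t < j) ∨ (∀ t, j < L t ∧ L t < i) := by
  have between : ∀ t, (i < L t ∧ L t < j) ∨ (j < L t ∧ L t < i) := fun t => by
    have ht := fun h₀ => h (prod_eq_zero (mem_univ t) h₀)
    split_ifs at ht with h₁ h₂
    exacts [Or.inl h₁, Or.inr h₂, absurd rfl ht]
  obtain ⟨t₀⟩ := ‹Nonempty ι›
  rcases between t₀ with ⟨h₁, h₂⟩ | ⟨h₁, h₂⟩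
  · exact Or.inl fun t => (between t).resolve_right fun h' =>
      lt_asymm (h₁.trans h₂) (h'.1.trans h'.2)
  · exact Or.inr fun t => (between t).resolve_left fun h' =>
      lt_asymm (h₁.trans h₂) (h'.1.trans h'.2)

end CrossingSign

theorem Finset.sum_smul_eq_one_add_smul_sum_product {α R M : Type*} [DecidableEq α]
    [Semiring R] [AddCommMonoid M] [Module R M] {S : Finset (α × α)} {A B : Finset α}
    (f : α × α → R) (W : α × α → M) (s : R)
    (hAB : Disjoint A B) (hS : A ×ˢ B ∪ B ×ˢ A ⊆ S)
    (hf : ∀ p ∈ S, f p ≠ 0 → p ∈ A ×ˢ B ∪ B ×ˢ A)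
    (hfAB : ∀ p ∈ A ×ˢ B, f p = 1) (hfBA : ∀ p ∈ B ×ˢ A, f p = s) (hW : ∀ p, W p.swap = W p) :
    ∑ p ∈ S, f p • W p = (1 + s) • ∑ p ∈ A ×ˢ B, W p := by
  rw [← sum_subset hS fun p hpS hp => by rw [not_imp_comm.1 (hf p hpS) hp, zero_smul],
    sum_union (disjoint_product.2 (Or.inl hAB)), add_smul, one_smul, smul_sum]
  congr 1
  · exact sum_congr rfl fun p hp => by rw [hfAB p hp, one_smul]
  · refine sum_equiv (Equiv.prodComm α α) (fun p => by simp [and_comm]) fun p hp => ?_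
    rw [hfBA p hp, Equiv.prodComm_apply, hW]

theorem sum_crossingSign_smul_ιMulti_mul {R M α ι : Type*} [CommRing R] [AddCommGroup M]
    [Module R M] [Fintype α] [LinearOrder α] [Fintype ι] [Nonempty ι] (L : ι → α)
    (x y : α → M) (c : ExteriorAlgebra R M) :
    ∑ p ∈ univ.filter (fun p : α × α => p.1 ≠ p.2 ∧ (∀ t, p.1 ≠ L t) ∧ (∀ t, p.2 ≠ L t)),
        crossingSign R L p.1 p.2 • (ιMulti R 4 ![x p.1, y p.1, x p.2, y p.2] * c) =
      (1 + (-1 : R) ^ Fintype.card ι) •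
        ((∑ ℓ ∈ univ.filter (fun ℓ => ∀ t, ℓ < L t), ιMulti R 2 ![x ℓ, y ℓ]) *
          (∑ ℓ ∈ univ.filter (fun ℓ => ∀ t, L t < ℓ), ιMulti R 2 ![x ℓ, y ℓ]) * c) := by
  set ω : α → ExteriorAlgebra R M := fun ℓ => ιMulti R 2 ![x ℓ, y ℓ]
  set A := univ.filter (fun ℓ => ∀ t, ℓ < L t)
  set B := univ.filter (fun ℓ => ∀ t, L t < ℓ)
  have mem_AB (p : α × α) : p ∈ A ×ˢ B ↔ ∀ t, p.1 < L t ∧ L t < p.2 := by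
    simp [A, B, forall_and]
  have mem_BA (p : α × α) : p ∈ B ×ˢ A ↔ ∀ t, p.2 < L t ∧ L t < p.1 := by
    simp [A, B, forall_and, and_comm]
  simp_rw [← ιMulti_two_mul_ιMulti_two, sum_mul_sum, sum_mul, ← sum_product']
  obtain ⟨t₀⟩ := ‹Nonempty ι›
  refine sum_smul_eq_one_add_smul_sum_product (fun p => crossingSign R L p.1 p.2)
    (fun p => ω p.1 * ω p.2 * c) _
    (disjoint_filter.2 fun ℓ _ h₁ h₂ => lt_asymm (h₁ t₀) (h₂ t₀)) (fun p hp => ?_)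
    (fun p _ hp => by
      rw [mem_union, mem_AB, mem_BA]
      exact forall_between_of_crossingSign_ne_zero hp)
    (fun p hp => crossingSign_eq_one ((mem_AB p).1 hp))
    (fun p hp => crossingSign_eq_neg_one_pow ((mem_BA p).1 hp))
    (fun p => congrArg (· * c) (commute_ιMulti_two _ _ _ _).eq)
  simp only [mem_filter, mem_univ, true_and]
  rcases mem_union.1 hp with h | h
  · exact ne_and_forall_ne_of_forall_between ((mem_AB p).1 h)
  · obtain ⟨hne, h₂, h₁⟩ := ne_and_forall_ne_of_forall_between ((mem_BA p).1 h)
    exact ⟨hne.symm, h₁, h₂⟩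

theorem statement14_general (g : ℕ) (k : ℕ) (hk : 1 ≤ k) (L : Fin k → Fin g) :
    (∑ p ∈ Finset.univ.filter (fun p : Fin g × Fin g =>
          p.1 ≠ p.2 ∧ (∀ t, p.1 ≠ L t) ∧ (∀ t, p.2 ≠ L t)),
        (∏ t : Fin k, if (p.1 : ℕ) < (L t : ℕ) ∧ (L t : ℕ) < (p.2 : ℕ) then (1 : ℚ)
            else if (p.2 : ℕ) < (L t : ℕ) ∧ (L t : ℕ) < (p.1 : ℕ) then -1 else 0) •
          (ExteriorAlgebra.ιMulti ℚ 4 ![aa g p.1, bb g p.1, aa g p.2, bb g p.2] *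
            ExteriorAlgebra.ιMulti ℚ k (fun t => aa g (L t))) =
      (1 + (-1 : ℚ) ^ k) •
        ((∑ ℓ ∈ Finset.univ.filter (fun ℓ : Fin g => ∀ t, (ℓ : ℕ) < (L t : ℕ)),
            ExteriorAlgebra.ιMulti ℚ 2 ![aa g ℓ, bb g ℓ]) *
          (∑ ℓ ∈ Finset.univ.filter (fun ℓ : Fin g => ∀ t, (L t : ℕ) < (ℓ : ℕ)),
            ExteriorAlgebra.ιMulti ℚ 2 ![aa g ℓ, bb g ℓ]) *
          ExteriorAlgebra.ιMulti ℚ k (fun t => aa g (L t)))) ∧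
    (Odd k →
      ∑ p ∈ Finset.univ.filter (fun p : Fin g × Fin g =>
          p.1 ≠ p.2 ∧ (∀ t, p.1 ≠ L t) ∧ (∀ t, p.2 ≠ L t)),
        (∏ t : Fin k, if (p.1 : ℕ) < (L t : ℕ) ∧ (L t : ℕ) < (p.2 : ℕ) then (1 : ℚ)
            else if (p.2 : ℕ) < (L t : ℕ) ∧ (L t : ℕ) < (p.1 : ℕ) then -1 else 0) •
          (ExteriorAlgebra.ιMulti ℚ 4 ![aa g p.1, bb g p.1, aa g p.2, bb g p.2] *
            ExteriorAlgebra.ιMulti ℚ k (fun t => aa g (L t))) = 0) ∧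
    (Even k →
      ∑ p ∈ Finset.univ.filter (fun p : Fin g × Fin g =>
          p.1 ≠ p.2 ∧ (∀ t, p.1 ≠ L t) ∧ (∀ t, p.2 ≠ L t)),
        (∏ t : Fin k, if (p.1 : ℕ) < (L t : ℕ) ∧ (L t : ℕ) < (p.2 : ℕ) then (1 : ℚ)
            else if (p.2 : ℕ) < (L t : ℕ) ∧ (L t : ℕ) < (p.1 : ℕ) then -1 else 0) •
          (ExteriorAlgebra.ιMulti ℚ 4 ![aa g p.1, bb g p.1, aa g p.2, bb g p.2] *
            ExteriorAlgebra.ιMulti ℚ k (fun t => aa g (L t))) =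
      (2 : ℚ) •
        ((∑ ℓ ∈ Finset.univ.filter (fun ℓ : Fin g => ∀ t, (ℓ : ℕ) < (L t : ℕ)),
            ExteriorAlgebra.ιMulti ℚ 2 ![aa g ℓ, bb g ℓ]) *
          (∑ ℓ ∈ Finset.univ.filter (fun ℓ : Fin g => ∀ t, (L t : ℕ) < (ℓ : ℕ)),
            ExteriorAlgebra.ιMulti ℚ 2 ![aa g ℓ, bb g ℓ]) *
          ExteriorAlgebra.ιMulti ℚ k (fun t => aa g (L t)))) := by
  have : Nonempty (Fin k) := ⟨⟨0, hk⟩⟩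
  have main := sum_crossingSign_smul_ιMulti_mul (R := ℚ) L (aa g) (bb g)
    (ιMulti ℚ k fun t => aa g (L t))
  -- The statement compares `Fin g` through `ℕ`; `convert` matches the decidability instances.
  simp only [crossingSign, Fintype.card_fin, ← Fin.val_fin_lt] at main
  refine (fun key => ⟨key, fun hodd => key.trans ?_, fun heven => key.trans ?_⟩)
    (by convert main using 4)
  · rw [hodd.neg_one_pow, add_neg_cancel, zero_smul]
  · rw [heven.neg_one_pow, one_add_one_eq_two]

/-- Let `k ≥ 1` and let `1 < ℓ_1 < ⋯ < ℓ_k < g` (here encoded 0-based by a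
strictly monotone `L : Fin k → Fin g` with `0 < L t < g - 1`), and set
`c = a_{ℓ_1}∧⋯∧a_{ℓ_k}`.  For each ordered pair `(ℓ, ℓ')` of distinct elements of
`{1, …, g} \ {ℓ_1, …, ℓ_k}`, let `ε_{ℓ,ℓ'} = Π_i ε_i` with `ε_i = 1` if `ℓ < ℓ_i < ℓ'`,
`ε_i = -1` if `ℓ' < ℓ_i < ℓ`, and `ε_i = 0` otherwise.  With
`ω_0 = Σ_{ℓ < ℓ_1} a_ℓ∧b_ℓ` and `ω^0 = Σ_{ℓ' > ℓ_k} a_{ℓ'}∧b_{ℓ'}`, one has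
`Σ_{(ℓ,ℓ')} ε_{ℓ,ℓ'} · a_ℓ∧b_ℓ∧a_{ℓ'}∧b_{ℓ'}∧c = (1 + (-1)^k) · ω_0∧ω^0∧c`;
in particular the sum vanishes when `k` is odd and equals `2·ω_0∧ω^0∧c` when `k` is even. -/
theorem statement14 (g : ℕ) (hg : 2 ≤ g) (k : ℕ) (hk : 1 ≤ k)
    (L : Fin k → Fin g) (hLmono : StrictMono L)
    (hL1 : ∀ t, 0 < (L t : ℕ)) (hL2 : ∀ t, (L t : ℕ) < g - 1) :
    (∑ p ∈ Finset.univ.filter (fun p : Fin g × Fin g =>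
          p.1 ≠ p.2 ∧ (∀ t, p.1 ≠ L t) ∧ (∀ t, p.2 ≠ L t)),
        (∏ t : Fin k, if (p.1 : ℕ) < (L t : ℕ) ∧ (L t : ℕ) < (p.2 : ℕ) then (1 : ℚ)
            else if (p.2 : ℕ) < (L t : ℕ) ∧ (L t : ℕ) < (p.1 : ℕ) then -1 else 0) •
          (ExteriorAlgebra.ιMulti ℚ 4 ![aa g p.1, bb g p.1, aa g p.2, bb g p.2] *
            ExteriorAlgebra.ιMulti ℚ k (fun t => aa g (L t))) =
      (1 + (-1 : ℚ) ^ k) •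
        ((∑ ℓ ∈ Finset.univ.filter (fun ℓ : Fin g => ∀ t, (ℓ : ℕ) < (L t : ℕ)),
            ExteriorAlgebra.ιMulti ℚ 2 ![aa g ℓ, bb g ℓ]) *
          (∑ ℓ ∈ Finset.univ.filter (fun ℓ : Fin g => ∀ t, (L t : ℕ) < (ℓ : ℕ)),
            ExteriorAlgebra.ιMulti ℚ 2 ![aa g ℓ, bb g ℓ]) *
          ExteriorAlgebra.ιMulti ℚ k (fun t => aa g (L t)))) ∧
    (Odd k →
      ∑ p ∈ Finset.univ.filter (fun p : Fin g × Fin g =>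
          p.1 ≠ p.2 ∧ (∀ t, p.1 ≠ L t) ∧ (∀ t, p.2 ≠ L t)),
        (∏ t : Fin k, if (p.1 : ℕ) < (L t : ℕ) ∧ (L t : ℕ) < (p.2 : ℕ) then (1 : ℚ)
            else if (p.2 : ℕ) < (L t : ℕ) ∧ (L t : ℕ) < (p.1 : ℕ) then -1 else 0) •
          (ExteriorAlgebra.ιMulti ℚ 4 ![aa g p.1, bb g p.1, aa g p.2, bb g p.2] *
            ExteriorAlgebra.ιMulti ℚ k (fun t => aa g (L t))) = 0) ∧
    (Even k →
      ∑ p ∈ Finset.univ.filter (fun p : Fin g × Fin g =>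
          p.1 ≠ p.2 ∧ (∀ t, p.1 ≠ L t) ∧ (∀ t, p.2 ≠ L t)),
        (∏ t : Fin k, if (p.1 : ℕ) < (L t : ℕ) ∧ (L t : ℕ) < (p.2 : ℕ) then (1 : ℚ)
            else if (p.2 : ℕ) < (L t : ℕ) ∧ (L t : ℕ) < (p.1 : ℕ) then -1 else 0) •
          (ExteriorAlgebra.ιMulti ℚ 4 ![aa g p.1, bb g p.1, aa g p.2, bb g p.2] *
            ExteriorAlgebra.ιMulti ℚ k (fun t => aa g (L t))) =
      (2 : ℚ) •
        ((∑ ℓ ∈ Finset.univ.filter (fun ℓ : Fin g => ∀ t, (ℓ : ℕ) < (L t : ℕ)),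
            ExteriorAlgebra.ιMulti ℚ 2 ![aa g ℓ, bb g ℓ]) *
          (∑ ℓ ∈ Finset.univ.filter (fun ℓ : Fin g => ∀ t, (L t : ℕ) < (ℓ : ℕ)),
            ExteriorAlgebra.ιMulti ℚ 2 ![aa g ℓ, bb g ℓ]) *
          ExteriorAlgebra.ιMulti ℚ k (fun t => aa g (L t)))) :=
  statement14_general g k hk L
end
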